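/- Let ¢ be a rational with ¢ ≥ 1, and let a, b, k be natural numbers with k ≤ a and ¢·a ≤ b. Then the falling factorial satisfies ¢^k · a·(a−1)···(a−k+1) ≤ b·(b−1)···(b−k+1); that is, ¢^k · (a! / (a−k)!) ≤ b! / (b−k)!. -/
import Mathlib

theorem stmt5 (cent : ℚ) (hcent : 1 ≤ cent) (a b k : ℕ) (hka : k ≤ a)
    (hab : cent * a ≤ b) :
    cent ^ k * (a.descFactorial k : ℚ) ≤ (b.descFactorial k : ℚ) := by
  have hcent0 : (0:ℚ) ≤ cent := le_trans zero_le_one hcent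
  have hab' : (a:ℚ) ≤ b := le_trans (le_mul_of_one_le_left (Nat.cast_nonneg a) hcent) hab
  have hkb : k ≤ b := hka.trans (by exact_mod_cast hab')
  induction k with
  | zero => simp
  | succ n ih =>
    have hna : n ≤ a := Nat.le_of_succ_le hka
    have hnb : n ≤ b := Nat.le_of_succ_le hkb
    rw [Nat.descFactorial_succ, Nat.descFactorial_succ]
    push_cast [Nat.cast_sub hna, Nat.cast_sub hnb]
    have h1 : cent * ((a:ℚ) - n) ≤ (b:ℚ) - n := by
      have : cent * n ≥ (n:ℚ) := le_mul_of_one_le_left (Nat.cast_nonneg n) hcent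
      nlinarith
    have h2 : cent ^ n * (a.descFactorial n : ℚ) ≤ (b.descFactorial n : ℚ) :=
      ih hna hnb
    have hA : (0:ℚ) ≤ (a:ℚ) - n := by
      have : (n:ℚ) ≤ a := by exact_mod_cast hna
      linarith
    calc cent ^ (n+1) * (((a:ℚ) - n) * (a.descFactorial n : ℚ))
        = (cent * ((a:ℚ) - n)) * (cent ^ n * (a.descFactorial n : ℚ)) := by ring
      _ ≤ ((b:ℚ) - n) * (b.descFactorial n : ℚ) := by
          apply mul_le_mul h1 h2 (by positivity) (by linarith)
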